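/- Every word w over the positive integers is stalactic-equivalent to exactly one word of the form a₁^{m₁} a₂^{m₂} ⋯ a_k^{m_k} where the letters a₁, …, a_k are pairwise distinct and all exponents mᵢ are at least 1 (namely the word listing, in order of first occurrence from the right in a suitable canonical ordering, each distinct letter of w repeated according to its multiplicity). -/

import Mathlib

open scoped Classical

/-- Words over the positive integers. -/
abbrev Word : Type := List ℕ+

/-- Evaluation of a word: number of occurrences of each letter. -/
def ev (w : Word) : ℕ+ → ℕ := fun a => w.count a

/-- A monoid congruence on the free monoid `(ℕ⁺)*`. -/
def IsCongruence (r : Word → Word → Prop) : Prop :=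
  Equivalence r ∧ ∀ u v u' v', r u v → r u' v' → r (u ++ u') (v ++ v')

/-- Restriction of a word to the letters belonging to a set `I`. -/
noncomputable def restrictTo (I : Set ℕ+) (w : Word) : Word :=
  w.filter fun a => decide (a ∈ I)

/-- `I` is an interval (order-convex subset) of `ℕ⁺`. -/
def IsIntervalSet (I : Set ℕ+) : Prop :=
  ∀ ⦃a b c : ℕ+⦄, a ∈ I → c ∈ I → a ≤ b → b ≤ c → b ∈ I

/-- Compatibility with restriction to alphabet intervals. -/
def CompatRestrict (r : Word → Word → Prop) : Prop :=
  ∀ I : Set ℕ+, IsIntervalSet I → ∀ u v, r u v → r (restrictTo I u) (restrictTo I v)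

/-- `r` is a `φ`-congruence. -/
def IsPhiCongruence (φ : Word → Word) (r : Word → Word → Prop) : Prop :=
  ∀ u v, r u v ↔ (r (φ u) (φ v) ∧ ev u = ev v)

/-- Standardization. -/
def std (w : Word) : Word :=
  (List.range w.length).map fun i =>
    ⟨((List.range w.length).countP fun j =>
        decide (w.getD j 1 < w.getD i 1 ∨ (w.getD j 1 = w.getD i 1 ∧ j < i))) + 1,
      Nat.succ_pos _⟩

/-- Packing. -/
def pack (w : Word) : Word :=
  w.map fun a => ⟨(w.dedup.countP fun b => decide (b < a)) + 1, Nat.succ_pos _⟩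

theorem parkBad_ex (w : Word) :
    ∃ d : ℕ, 1 ≤ d ∧ (w.countP fun a : ℕ+ => decide ((a : ℕ) ≤ d)) < d :=
  ⟨w.length + 1, Nat.succ_le_succ (Nat.zero_le _), by
    have h : (w.countP fun a : ℕ+ => decide ((a : ℕ) ≤ w.length + 1)) ≤ w.length :=
      List.countP_le_length
    omega⟩

/-- The smallest `d ≥ 1` such that fewer than `d` letters of `w` are `≤ d`. -/
noncomputable def parkBad (w : Word) : ℕ := Nat.find (parkBad_ex w)

/-- One pass of the parkization procedure, with fuel. -/
noncomputable def parkAux : ℕ → Word → Word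
  | 0, w => w
  | f + 1, w =>
    if parkBad w ≤ w.length then
      parkAux f (w.map fun a : ℕ+ => if parkBad w < (a : ℕ) then (a - 1 : ℕ+) else a)
    else w

/-- Parkization. The fuel `(sum of the letters)` always suffices,
since every pass strictly decreases the sum of the letters. -/
noncomputable def park (w : Word) : Word := parkAux (w.map fun a => (a : ℕ)).sum w

/-- Smallest monoid congruence containing `base`. -/
def CongClosure (base : Word → Word → Prop) (u v : Word) : Prop :=
  ∀ r : Word → Word → Prop, IsCongruence r → (∀ x y, base x y → r x y) → r u v

def sylvBase (x y : Word) : Prop :=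
  ∃ (a b c : ℕ+) (v : Word), a ≤ b ∧ b < c ∧
    x = a :: c :: (v ++ [b]) ∧ y = c :: a :: (v ++ [b])

/-- The sylvester congruence. -/
def sylv : Word → Word → Prop := CongClosure sylvBase

def stalBase (x y : Word) : Prop :=
  ∃ (a b : ℕ+) (v : Word), x = b :: a :: (v ++ [b]) ∧ y = a :: b :: (v ++ [b])

/-- The stalactic congruence. -/
def stal : Word → Word → Prop := CongClosure stalBase

def sylvSharpBase (x y : Word) : Prop :=
  ∃ (a b c : ℕ+) (v : Word), a < b ∧ b ≤ c ∧
    x = b :: (v ++ [a, c]) ∧ y = b :: (v ++ [c, a])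

/-- The #-sylvester congruence. -/
def sylvSharp : Word → Word → Prop := CongClosure sylvSharpBase

/-- The taïga congruence: join of the sylvester and stalactic congruences. -/
def taiga : Word → Word → Prop := CongClosure fun u v => sylv u v ∨ stal u v

/-- Planar binary trees with letter labels. -/
inductive BT : Type where
  | leaf : BT
  | node : BT → ℕ+ → BT → BT
deriving DecidableEq

/-- Binary search tree insertion of a letter. -/
def BT.insert : BT → ℕ+ → BT
  | .leaf, l => .node .leaf l .leaf
  | .node L b R, l => if l ≤ b then .node (L.insert l) b R else .node L b (R.insert l)

/-- Binary search tree of a word: insert the letters from right to left. -/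
def bst (w : Word) : BT := w.foldr (fun l t => t.insert l) .leaf

/-- Planar binary trees labelled by a letter and a multiplicity. -/
inductive BSTM : Type where
  | leaf : BSTM
  | node : BSTM → ℕ+ → ℕ+ → BSTM → BSTM   -- left, letter, multiplicity, right
deriving DecidableEq

/-- Insertion of a letter into a binary search tree with multiplicities. -/
def BSTM.insert : BSTM → ℕ+ → BSTM
  | .leaf, l => .node .leaf l 1 .leaf
  | .node L l' k R, l =>
    if l = l' then .node L l' (k + 1) R
    else if l < l' then .node (L.insert l) l' k R
    else .node L l' k (R.insert l)

/-- The `P`-symbol: insert the letters of `w` from right to left. -/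
def Pmap (w : Word) : BSTM := w.foldr (fun l t => t.insert l) .leaf

/-- Letters of a BSTM in left-to-right (infix) order. -/
def BSTM.letters : BSTM → List ℕ+
  | .leaf => []
  | .node L l _ R => L.letters ++ l :: R.letters

/-- The binary search tree property for a BSTM. -/
def BSTM.IsSearchTree : BSTM → Prop
  | .leaf => True
  | .node L l _ R =>
      (∀ x ∈ L.letters, x < l) ∧ (∀ x ∈ R.letters, l < x) ∧
        L.IsSearchTree ∧ R.IsSearchTree

/-- Total multiplicity of a letter in a BSTM. -/
def BSTM.mult : BSTM → ℕ+ → ℕ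
  | .leaf, _ => 0
  | .node L l k R, a => L.mult a + (if a = l then (k : ℕ) else 0) + R.mult a

/-- Size of a BSTM: sum of the multiplicities. -/
def BSTM.size : BSTM → ℕ
  | .leaf => 0
  | .node L _ k R => L.size + (k : ℕ) + R.size

/-- Planar binary trees with multiplicities. -/
inductive BTM : Type where
  | leaf : BTM
  | node : BTM → ℕ+ → BTM → BTM
deriving DecidableEq

/-- Size of a BTM: sum of the multiplicities. -/
def BTM.size : BTM → ℕ
  | .leaf => 0
  | .node L k R => L.size + (k : ℕ) + R.size

/-- Number of nodes of a BTM. -/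
def BTM.numNodes : BTM → ℕ
  | .leaf => 0
  | .node L _ R => L.numNodes + 1 + R.numNodes

/-- Forgetting the letters of a BSTM gives a BTM. -/
def forgetLetters : BSTM → BTM
  | .leaf => .leaf
  | .node L _ k R => .node (forgetLetters L) k (forgetLetters R)

/-- The `B`-symbol: the BTM underlying `P(w)`. -/
def Bmap (w : Word) : BTM := forgetLetters (Pmap w)

/-- A packed word: its set of letters is `{1, …, k}` for some `k`. -/
def IsPacked (w : Word) : Prop := ∀ a ∈ w, ∀ b : ℕ+, b ≤ a → b ∈ w

/-- Number of packed words inserting to the BTM `T`. -/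
noncomputable def fT (T : BTM) : ℕ :=
  Set.ncard {w : Word | IsPacked w ∧ Bmap w = T}

/-- The hook-type product over the subtrees of a BTM. -/
def hookProd : BTM → ℕ
  | .leaf => 1
  | .node L k R =>
      (BTM.node L k R).size * ((k : ℕ) - 1).factorial * hookProd L * hookProd R

/-- Label the nodes of a BTM in infix order starting from a given letter;
returns the labelled tree and the next unused letter. -/
def infixLabelAux : BTM → ℕ+ → BSTM × ℕ+
  | .leaf, n => (.leaf, n)
  | .node L k R, n =>
    let p := infixLabelAux L n
    let q := infixLabelAux R (p.2 + 1)
    (.node p.1 p.2 k q.1, q.2)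

/-- Label the nodes of a BTM by `1, …, k` in infix order. -/
def infixLabel (T : BTM) : BSTM := (infixLabelAux T 1).1

/-- A canonical stalactic word: a concatenation `a₁^{m₁} ⋯ a_k^{m_k}` of blocks
with pairwise distinct letters `aᵢ` and multiplicities `mᵢ ≥ 1`. -/
def IsCanonicalStal (u : Word) : Prop :=
  ∃ L : List (ℕ+ × ℕ+), (L.map Prod.fst).Nodup ∧
    u = (L.map fun p => List.replicate ((p.2 : ℕ)) p.1).flatten

/-!
A defining relation `ba·v·b ≡ ab·v·b` preserves the multiset of letters and the order in
which the letters occur for the last time, since the moved `b` is not a last occurrence.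
Both invariants are compatible with concatenation, so they are invariants of `stal`; they
determine the word listing the letters in order of last occurrence, each repeated according
to its multiplicity, which gives uniqueness. Conversely, a letter that occurs again later may
be moved rightwards past any letter, so a letter prepended to such a word can be slid into
its own block, which gives existence.
-/

namespace List

variable {α : Type*}

theorem mem_map_fst_of_mem_flatten_replicate {L : List (α × ℕ+)} {a : α}
    (h : a ∈ (L.map fun p => replicate p.2 p.1).flatten) : a ∈ L.map Prod.fst := by
  obtain ⟨_, hl, ha⟩ := mem_flatten.1 h
  obtain ⟨p, hp, rfl⟩ := mem_map.1 hl
  exact eq_of_mem_replicate ha ▸ mem_map_of_mem hp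

variable [DecidableEq α]

theorem dedup_union (l₁ l₂ : List α) : l₁.dedup ∪ l₂ = l₁ ∪ l₂ := by
  induction l₁ with
  | nil => rfl
  | cons a l ih =>
    by_cases ha : a ∈ l
    · rw [dedup_cons_of_mem ha, cons_union, insert_of_mem (mem_union_left ha _), ih]
    · rw [dedup_cons_of_notMem ha, cons_union, cons_union, ih]

theorem dedup_append_congr {u v u' v' : List α} (h : u.dedup = v.dedup)
    (h' : u'.dedup = v'.dedup) : (u ++ u').dedup = (v ++ v').dedup := by
  rw [dedup_append, ← dedup_union, h, h', dedup_union, ← dedup_append]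

theorem dedup_flatten_replicate {L : List (α × ℕ+)} (hL : (L.map Prod.fst).Nodup) :
    (L.map fun p => replicate p.2 p.1).flatten.dedup = L.map Prod.fst := by
  induction L with
  | nil => rfl
  | cons p L ih =>
    rw [map_cons, nodup_cons] at hL
    have hdisj : Disjoint (replicate p.2 p.1) (L.map fun p => replicate p.2 p.1).flatten :=
      fun a ha ha' => hL.1 (eq_of_mem_replicate ha ▸ mem_map_fst_of_mem_flatten_replicate ha')
    rw [map_cons, flatten_cons, hdisj.dedup_append, replicate_dedup p.2.ne_zero, ih hL.2,
      map_cons, singleton_append]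

theorem count_flatten_replicate {L : List (α × ℕ+)} (hL : (L.map Prod.fst).Nodup)
    {p : α × ℕ+} (hp : p ∈ L) : (L.map fun p => replicate p.2 p.1).flatten.count p.1 = p.2 := by
  induction L with
  | nil => cases hp
  | cons q L ih =>
    rw [map_cons, nodup_cons] at hL
    rw [map_cons, flatten_cons, count_append, count_replicate]
    rcases mem_cons.1 hp with rfl | hp
    · simp [count_eq_zero.2 fun h => hL.1 (mem_map_fst_of_mem_flatten_replicate h)]
    · have hne : q.1 ≠ p.1 := fun h => hL.1 (h ▸ mem_map_of_mem hp)
      simp [hne, ih hL.2 hp]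

end List

theorem CongClosure.isCongruence (base : Word → Word → Prop) :
    IsCongruence (CongClosure base) :=
  ⟨⟨fun u _ hr _ => hr.1.refl u, fun h r hr hb => hr.1.symm (h r hr hb),
      fun h h' r hr hb => hr.1.trans (h r hr hb) (h' r hr hb)⟩,
    fun _ _ _ _ h h' r hr hb => hr.2 _ _ _ _ (h r hr hb) (h' r hr hb)⟩

theorem CongClosure.of_base {base : Word → Word → Prop} {x y : Word} (h : base x y) :
    CongClosure base x y :=
  fun _ _ hb => hb x y h

theorem CongClosure.le {base r : Word → Word → Prop} (hr : IsCongruence r)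
    (hb : ∀ x y, base x y → r x y) {u v : Word} (h : CongClosure base u v) : r u v :=
  h r hr hb

theorem isCongruence_perm : IsCongruence List.Perm :=
  ⟨List.Perm.eqv _, fun _ _ _ _ => List.Perm.append⟩

theorem isCongruence_dedup_eq : IsCongruence fun u v : Word => u.dedup = v.dedup :=
  ⟨⟨fun _ => rfl, Eq.symm, Eq.trans⟩, fun _ _ _ _ => List.dedup_append_congr⟩

namespace stal

theorem equivalence : Equivalence stal := (CongClosure.isCongruence _).1

theorem append {u v u' v' : Word} (h : stal u v) (h' : stal u' v') :
    stal (u ++ u') (v ++ v') :=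
  (CongClosure.isCongruence _).2 _ _ _ _ h h'

theorem perm {u v : Word} (h : stal u v) : u.Perm v :=
  CongClosure.le isCongruence_perm (fun _ _ ⟨_, _, _, hx, hy⟩ => hx ▸ hy ▸ .swap _ _ _) h

theorem dedup_eq {u v : Word} (h : stal u v) : u.dedup = v.dedup := by
  refine CongClosure.le isCongruence_dedup_eq (fun x y ⟨a, b, v, hx, hy⟩ => ?_) h
  have hb : b ∈ v ++ [b] := by simp
  rw [hx, hy, List.dedup_cons_of_mem (List.mem_cons_of_mem a hb)]
  exact List.dedup_append_congr (u := [a]) rfl (List.dedup_cons_of_mem hb).symm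

theorem cons_cons_swap {a c : ℕ+} {s : Word} (ha : a ∈ s) :
    stal (a :: c :: s) (c :: a :: s) := by
  obtain ⟨s₁, s₂, rfl⟩ := List.append_of_mem ha
  simpa using append (CongClosure.of_base ⟨c, a, s₁, rfl, rfl⟩) (equivalence.refl s₂)

theorem cons_append_of_mem {a : ℕ+} (p : Word) {s : Word} (ha : a ∈ s) :
    stal (a :: (p ++ s)) (p ++ a :: s) := by
  induction p with
  | nil => exact equivalence.refl _
  | cons c p ih =>
    exact equivalence.trans (cons_cons_swap (List.mem_append_right p ha))
      ((equivalence.refl [c]).append ih)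

end stal

noncomputable def stalNormalForm (w : Word) : Word :=
  w.dedup.flatMap fun a => List.replicate (w.count a) a

theorem stalNormalForm_eq_of_perm_of_dedup_eq {u v : Word} (hp : u.Perm v)
    (hd : u.dedup = v.dedup) : stalNormalForm u = stalNormalForm v := by
  simp only [stalNormalForm, hd, hp.count_eq]

theorem isCanonicalStal_stalNormalForm (w : Word) : IsCanonicalStal (stalNormalForm w) := by
  refine ⟨w.dedup.map fun a => (a, (w.count a).toPNat'), ?_, ?_⟩
  · simpa [Function.comp_def] using w.nodup_dedup
  · rw [stalNormalForm, List.flatMap_def, List.map_map]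
    congr 1
    refine List.map_congr_left fun a ha => ?_
    simp [PNat.toPNat'_coe (List.count_pos_iff.2 (List.mem_dedup.1 ha))]

theorem IsCanonicalStal.stalNormalForm_eq {u : Word} (h : IsCanonicalStal u) :
    stalNormalForm u = u := by
  obtain ⟨L, hL, rfl⟩ := h
  rw [stalNormalForm, List.dedup_flatten_replicate hL, List.flatMap_map, List.flatMap_def]
  congr 1
  exact List.map_congr_left fun p hp => by rw [List.count_flatten_replicate hL hp]

theorem stalNormalForm_cons_of_notMem {a : ℕ+} {t : Word} (ha : a ∉ t) :
    stalNormalForm (a :: t) = a :: stalNormalForm t := by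
  rw [stalNormalForm, List.dedup_cons_of_notMem ha, List.flatMap_cons,
    List.count_cons_self, List.count_eq_zero_of_not_mem ha, stalNormalForm]
  refine congrArg _ (List.flatMap_congr fun b hb => ?_)
  rw [List.count_cons_of_ne (by rintro rfl; exact ha (List.mem_dedup.1 hb))]

theorem stalNormalForm_cons_of_mem {a : ℕ+} {t : Word} (ha : a ∈ t) :
    ∃ p s, a ∈ s ∧ stalNormalForm t = p ++ s ∧ stalNormalForm (a :: t) = p ++ a :: s := by
  obtain ⟨D₁, D₂, hD⟩ := List.append_of_mem (List.mem_dedup.2 ha)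
  have hnd : (a :: (D₁ ++ D₂)).Nodup := List.nodup_middle.1 (hD ▸ t.nodup_dedup)
  have hcount : ∀ b ∈ D₁ ++ D₂, (a :: t).count b = t.count b := fun b hb =>
    List.count_cons_of_ne (by rintro rfl; exact hnd.notMem hb)
  refine ⟨D₁.flatMap fun b => List.replicate (t.count b) b,
    List.replicate (t.count a) a ++ D₂.flatMap fun b => List.replicate (t.count b) b,
    List.mem_append_left _ (List.mem_replicate.2 ⟨(List.count_pos_iff.2 ha).ne', rfl⟩),
    by rw [stalNormalForm, hD, List.flatMap_append, List.flatMap_cons], ?_⟩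
  rw [stalNormalForm, List.dedup_cons_of_mem ha, hD, List.flatMap_append, List.flatMap_cons,
    List.flatMap_congr fun b hb => by rw [hcount b (List.mem_append_left _ hb)],
    List.flatMap_congr (l := D₂) fun b hb => by rw [hcount b (List.mem_append_right _ hb)],
    List.count_cons_self, List.replicate_succ, List.cons_append]

theorem stal_stalNormalForm (w : Word) : stal w (stalNormalForm w) := by
  induction w with
  | nil => exact stal.equivalence.refl _
  | cons a t ih =>
    refine stal.equivalence.trans ((stal.equivalence.refl [a]).append ih) ?_
    by_cases ha : a ∈ t
    · obtain ⟨p, s, has, ht, hat⟩ := stalNormalForm_cons_of_mem ha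
      rw [ht, hat]
      exact stal.cons_append_of_mem p has
    · rw [stalNormalForm_cons_of_notMem ha]
      exact stal.equivalence.refl _

theorem stal_canonical_form (w : Word) :
    ∃! u : Word, IsCanonicalStal u ∧ stal w u := by
  refine ⟨stalNormalForm w, ⟨isCanonicalStal_stalNormalForm w, stal_stalNormalForm w⟩, ?_⟩
  rintro u ⟨hu, hwu⟩
  rw [← hu.stalNormalForm_eq,
    stalNormalForm_eq_of_perm_of_dedup_eq hwu.perm.symm hwu.dedup_eq.symm]
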